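/- For the massive Thirring soliton U_ω, the vector Ṽ_t = iωx(0,0,U_ω,−conj U_ω)ᵗ − (1/2)(0,0,U_ω,conj U_ω)ᵗ satisfies H₋ applied to its last two components equals iσ₃ applied to the last two components of V_t-related data; concretely, the 2-component function W(x) = iωx(U_ω(x),−conj U_ω(x))ᵗ − (1/2)(U_ω(x),conj U_ω(x))ᵗ satisfies H₋ W = iσ₃(U_ω', conj(U_ω)')ᵗ, where H₋ = [[−i∂ₓ+ω, 1−U_ω²],[1−conj(U_ω)², i∂ₓ+ω]]. -/

import Mathlib

/-!
Since `ω + cosh (2μx) = |D|²` for `D = √(1+ω) cosh (μx) + i √(1-ω) sinh (μx)`, whose conjugate is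
the numerator of the formula, the soliton is `U = √2 μ / D`. The stationary equation
`iU' - ωU + Ū = |U|² U` then becomes `-i D' D̄ - ω |D|² + D² = 2μ²`, a polynomial identity in
`cosh (μx)` and `sinh (μx)`. Along any solution of the stationary equation `(1 - U²) Ū = ωU - iU'`,
which collapses the first component of `H₋ W` to `iU'`; the second component is its complex conjugate, as `W₂ = conj W₁`.
-/

/-- The massive Thirring line soliton profile. -/
noncomputable def thirringSoliton (ω x : ℝ) : ℂ :=
  (↑(Real.sqrt 2 * Real.sqrt (1 - ω ^ 2)) : ℂ) *
    ((↑(Real.sqrt (1 + ω) * Real.cosh (Real.sqrt (1 - ω ^ 2) * x)) : ℂ)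
      - Complex.I * (↑(Real.sqrt (1 - ω) * Real.sinh (Real.sqrt (1 - ω ^ 2) * x)) : ℂ)) /
    (↑(ω + Real.cosh (2 * Real.sqrt (1 - ω ^ 2) * x)) : ℂ)

/-- First component of the generalized translational eigenvector `W`. -/
noncomputable def W₁ (ω x : ℝ) : ℂ :=
  Complex.I * ω * x * thirringSoliton ω x - (1/2 : ℂ) * thirringSoliton ω x

/-- Second component of the generalized translational eigenvector `W`. -/
noncomputable def W₂ (ω x : ℝ) : ℂ :=
  -(Complex.I * ω * x) * (starRingEnd ℂ) (thirringSoliton ω x)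
    - (1/2 : ℂ) * (starRingEnd ℂ) (thirringSoliton ω x)

open Complex ComplexConjugate

theorem coshSinh_thirring_identity {a b c s ω : ℂ} (ha : a ^ 2 = 1 + ω) (hb : b ^ 2 = 1 - ω)
    (hcs : c ^ 2 - s ^ 2 = 1) :
    -I * (a * b * (a * s + I * (b * c))) * (a * c - I * (b * s))
        - ω * ((a * c + I * (b * s)) * (a * c - I * (b * s))) + (a * c + I * (b * s)) ^ 2
      = 2 * (a * b) ^ 2 := by
  -- `a² + b² = 2` kills the `I`-part, and `(1 - ω) a² = (1 + ω) b² = (a b)²`.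
  linear_combination (b ^ 2 * s ^ 2 - I * a * b * s * c) * ha
    + (-(I * a * b * s * c) - a ^ 2 * c ^ 2) * hb + 2 * a ^ 2 * b ^ 2 * hcs
    + (a ^ 2 * b ^ 2 * s ^ 2 - a ^ 2 * b ^ 2 * c ^ 2 + ω * b ^ 2 * s ^ 2 + b ^ 2 * s ^ 2
      + I * a * b ^ 3 * c * s) * I_sq

theorem thirringODE_const_div {D : ℝ → ℂ} {D' : ℂ} {k ω x : ℝ} (hD : HasDerivAt D D' x)
    (hD0 : D x ≠ 0) (h : -I * D' * conj (D x) - ω * (D x * conj (D x)) + D x ^ 2 = k ^ 2) :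
    I * deriv (fun y => k / D y) x - ω * (k / D x) + conj (k / D x)
      = (k / D x) ^ 2 * conj (k / D x) := by
  have hconj : conj (D x) ≠ 0 := (map_ne_zero _).mpr hD0
  rw [((hasDerivAt_const x (k : ℂ)).fun_div hD hD0).deriv]
  simp only [map_div₀, conj_ofReal]
  field_simp
  linear_combination (k : ℂ) * h

theorem translationalMode_fst_of_thirringODE {U : ℝ → ℂ} {ω x : ℝ} (hU : DifferentiableAt ℝ U x)
    (hode : I * deriv U x - ω * U x + conj (U x) = U x ^ 2 * conj (U x)) :
    -I * deriv (fun y : ℝ => I * ω * y * U y - 1 / 2 * U y) x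
        + ω * (I * ω * x * U x - 1 / 2 * U x)
        + (1 - U x ^ 2) * conj (I * ω * x * U x - 1 / 2 * U x)
      = I * deriv U x := by
  have hy : HasDerivAt (fun y : ℝ => I * ω * (y : ℂ)) (I * ω) x := by
    simpa using (hasDerivAt_id x).ofReal_comp.const_mul (I * ω)
  have hW : HasDerivAt (fun y : ℝ => I * ω * y * U y - 1 / 2 * U y)
      (I * ω * U x + I * ω * x * deriv U x - 1 / 2 * deriv U x) x :=
    (hy.mul hU.hasDerivAt).sub (hU.hasDerivAt.const_mul (1 / 2 : ℂ))
  simp only [hW.deriv, map_sub, map_mul, conj_I, conj_ofReal, map_div₀, map_one, map_ofNat]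
  linear_combination (-(I * ω * x) - 1 / 2) * hode - ω * U x * I_sq

theorem W₂_eq_conj_W₁ (ω : ℝ) : W₂ ω = fun y => conj (W₁ ω y) := by
  funext y
  simp only [W₁, W₂, map_sub, map_mul, conj_I, conj_ofReal, map_div₀, map_one, map_ofNat]
  ring

noncomputable def thirringDenom (ω x : ℝ) : ℂ :=
  √(1 + ω) * Real.cosh (√(1 - ω ^ 2) * x) + I * (√(1 - ω) * Real.sinh (√(1 - ω ^ 2) * x))

theorem hasDerivAt_thirringDenom (ω x : ℝ) :
    HasDerivAt (thirringDenom ω)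
      (√(1 - ω ^ 2) * (√(1 + ω) * Real.sinh (√(1 - ω ^ 2) * x)
        + I * (√(1 - ω) * Real.cosh (√(1 - ω ^ 2) * x)))) x := by
  have hlin : HasDerivAt (fun y : ℝ => √(1 - ω ^ 2) * y) (√(1 - ω ^ 2)) x := by
    simpa using (hasDerivAt_id x).const_mul (√(1 - ω ^ 2))
  have hcosh := ((Real.hasDerivAt_cosh _).comp x hlin).ofReal_comp.const_mul (√(1 + ω) : ℂ)
  have hsinh := ((Real.hasDerivAt_sinh _).comp x hlin).ofReal_comp.const_mul (√(1 - ω) : ℂ)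
  refine (hcosh.add (hsinh.const_mul I)).congr_deriv ?_
  push_cast
  ring

theorem conj_thirringDenom (ω x : ℝ) :
    conj (thirringDenom ω x)
      = √(1 + ω) * Real.cosh (√(1 - ω ^ 2) * x) - I * (√(1 - ω) * Real.sinh (√(1 - ω ^ 2) * x)) := by
  simp only [thirringDenom, map_add, map_mul, conj_ofReal, conj_I]
  ring

section Soliton

variable {ω : ℝ}

theorem thirringDenom_ne_zero (hω : -1 < ω) (x : ℝ) : thirringDenom ω x ≠ 0 := by
  have hre : (thirringDenom ω x).re = √(1 + ω) * Real.cosh (√(1 - ω ^ 2) * x) := by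
    simp only [thirringDenom, add_re, mul_re, mul_im, ofReal_re, ofReal_im, I_re, I_im]
    ring
  refine ne_zero_of_re_pos ?_
  rw [hre]
  exact mul_pos (Real.sqrt_pos.mpr (by linarith)) (Real.cosh_pos _)

theorem sqrt_one_sub_sq_eq (hω : -1 ≤ ω) : √(1 - ω ^ 2) = √(1 + ω) * √(1 - ω) := by
  rw [← Real.sqrt_mul (by linarith)]
  congr 1
  ring

theorem thirringSoliton_eq_div (hω : ω ∈ Set.Ioo (-1 : ℝ) 1) :
    thirringSoliton ω = fun x => ((√2 * √(1 - ω ^ 2) : ℝ) : ℂ) / thirringDenom ω x := by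
  funext x
  have hD := thirringDenom_ne_zero hω.1 x
  have hnormSq : ((ω + Real.cosh (2 * √(1 - ω ^ 2) * x) : ℝ) : ℂ)
      = conj (thirringDenom ω x) * thirringDenom ω x := by
    rw [conj_thirringDenom, thirringDenom]
    set a := √(1 + ω)
    set b := √(1 - ω)
    set c := Real.cosh (√(1 - ω ^ 2) * x)
    set s := Real.sinh (√(1 - ω ^ 2) * x)
    have hreal : ω + Real.cosh (2 * √(1 - ω ^ 2) * x) = a ^ 2 * c ^ 2 + b ^ 2 * s ^ 2 := by
      rw [mul_assoc, Real.cosh_two_mul, Real.sq_sqrt (by linarith [hω.1]),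
        Real.sq_sqrt (by linarith [hω.2])]
      linear_combination (-ω) * Real.cosh_sq_sub_sinh_sq (√(1 - ω ^ 2) * x)
    rw [hreal]
    push_cast
    linear_combination ((b : ℂ) ^ 2 * s ^ 2) * I_sq
  rw [thirringSoliton, hnormSq, div_eq_div_iff (mul_ne_zero ((map_ne_zero _).mpr hD) hD) hD,
    conj_thirringDenom]
  push_cast
  ring

theorem differentiableAt_thirringSoliton (hω : ω ∈ Set.Ioo (-1 : ℝ) 1) (x : ℝ) :
    DifferentiableAt ℝ (thirringSoliton ω) x := by
  rw [thirringSoliton_eq_div hω]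
  exact ((hasDerivAt_const x _).fun_div (hasDerivAt_thirringDenom ω x)
    (thirringDenom_ne_zero hω.1 x)).differentiableAt

theorem thirringSoliton_thirringODE (hω : ω ∈ Set.Ioo (-1 : ℝ) 1) (x : ℝ) :
    I * deriv (thirringSoliton ω) x - ω * thirringSoliton ω x + conj (thirringSoliton ω x)
      = thirringSoliton ω x ^ 2 * conj (thirringSoliton ω x) := by
  rw [thirringSoliton_eq_div hω]
  refine thirringODE_const_div (hasDerivAt_thirringDenom ω x) (thirringDenom_ne_zero hω.1 x) ?_
  rw [conj_thirringDenom, thirringDenom]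
  set c := Real.cosh (√(1 - ω ^ 2) * x)
  set s := Real.sinh (√(1 - ω ^ 2) * x)
  have ha : (√(1 + ω) : ℂ) ^ 2 = 1 + ω := by
    exact_mod_cast Real.sq_sqrt (by linarith [hω.1] : 0 ≤ 1 + ω)
  have hb : (√(1 - ω) : ℂ) ^ 2 = 1 - ω := by
    exact_mod_cast Real.sq_sqrt (by linarith [hω.2] : 0 ≤ 1 - ω)
  have hcs : (c : ℂ) ^ 2 - (s : ℂ) ^ 2 = 1 := by exact_mod_cast Real.cosh_sq_sub_sinh_sq _
  have h2 : (√2 : ℂ) ^ 2 = 2 := by exact_mod_cast Real.sq_sqrt zero_le_two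
  rw [sqrt_one_sub_sq_eq hω.1.le]
  push_cast
  linear_combination coshSinh_thirring_identity ha hb hcs - (√(1 + ω) * √(1 - ω) : ℂ) ^ 2 * h2

end Soliton

theorem thirring_generalized_eigenvector (ω : ℝ) (hω : ω ∈ Set.Ioo (-1 : ℝ) 1) (x : ℝ) :
    (-Complex.I * deriv (W₁ ω) x + (ω : ℂ) * W₁ ω x
        + (1 - thirringSoliton ω x ^ 2) * W₂ ω x
      = Complex.I * deriv (thirringSoliton ω) x) ∧
    (Complex.I * deriv (W₂ ω) x + (ω : ℂ) * W₂ ω x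
        + (1 - ((starRingEnd ℂ) (thirringSoliton ω x)) ^ 2) * W₁ ω x
      = -(Complex.I * (starRingEnd ℂ) (deriv (thirringSoliton ω) x))) := by
  have hfst : -I * deriv (W₁ ω) x + ω * W₁ ω x + (1 - thirringSoliton ω x ^ 2) * conj (W₁ ω x)
      = I * deriv (thirringSoliton ω) x :=
    translationalMode_fst_of_thirringODE (differentiableAt_thirringSoliton hω x)
      (thirringSoliton_thirringODE hω x)
  have hsnd := congrArg conj hfst
  simp only [map_add, map_mul, map_sub, map_neg, map_one, map_pow, conj_I, conj_ofReal,
    conj_conj] at hsnd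
  have hW₂ : W₂ ω x = conj (W₁ ω x) := congrFun (W₂_eq_conj_W₁ ω) x
  have hW₂' : deriv (W₂ ω) x = conj (deriv (W₁ ω) x) := by
    rw [W₂_eq_conj_W₁]
    exact deriv.star
  rw [hW₂, hW₂']
  exact ⟨hfst, by linear_combination hsnd⟩
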